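/- For all Y ∈ S₀ and Z₁, Z₂, Z₃, Z₄ ∈ S₁, the left-normed commutators satisfy [Y, Z₁, Z₂, Z₃, Z₄] = [Y, Z₃, Z₄, Z₁, Z₂], where [x₁,...,xₙ] denotes the left-normed iterated commutator [[...[x₁,x₂],...],xₙ]. -/

import Mathlib

/-! Since `[S₀, S₁] ⊆ S₁` and `[S₁, S₁] ⊆ S₀`, bracketing `Y0 a` with two elements of `S₁` lands
back in `S₀` and only rescales the parameter: `[Y0 a, Z₁, Z₂] = Y0 (2a · (n₁m₂ + m₁n₂))`. Doing this
twice, both sides equal `Y0 (4a · (n₁m₂ + m₁n₂) · (n₃m₄ + m₃n₄))`, which is symmetric in the pairs. -/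

open Matrix

variable {K : Type*} [Field K] [CharZero K]

/-- Elements of `S₀`: diag(0, 2a, -2a). -/
def Y0 (a : K) : Matrix (Fin 3) (Fin 3) K :=
  !![0, 0, 0; 0, 2*a, 0; 0, 0, -(2*a)]

/-- Elements of `S₁`: rows (0, -m, n), (-2n, 0, 0), (2m, 0, 0). -/
def Z1 (m n : K) : Matrix (Fin 3) (Fin 3) K :=
  !![0, -m, n; -(2*n), 0, 0; 2*m, 0, 0]

/-- Commutator of matrices. -/
def lb (A B : Matrix (Fin 3) (Fin 3) K) : Matrix (Fin 3) (Fin 3) K := A*B - B*A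

omit [CharZero K] in
lemma lb_Y0_Z1 (a m n : K) : lb (Y0 a) (Z1 m n) = Z1 (-(2 * a * m)) (2 * a * n) := by
  ext i j
  fin_cases i <;> fin_cases j <;> simp [lb, Y0, Z1] <;> ring

omit [CharZero K] in
lemma lb_Z1_Z1 (m n m' n' : K) : lb (Z1 m n) (Z1 m' n') = Y0 (n * m' - m * n') := by
  ext i j
  fin_cases i <;> fin_cases j <;> simp [lb, Y0, Z1] <;> ring

omit [CharZero K] in
lemma lb_lb_Y0_Z1_Z1 (a m n m' n' : K) :
    lb (lb (Y0 a) (Z1 m n)) (Z1 m' n') = Y0 (2 * a * (n * m' + m * n')) := by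
  rw [lb_Y0_Z1, lb_Z1_Z1]
  congr 1
  ring

theorem stmt11 (a m1 n1 m2 n2 m3 n3 m4 n4 : K) :
    lb (lb (lb (lb (Y0 a) (Z1 m1 n1)) (Z1 m2 n2)) (Z1 m3 n3)) (Z1 m4 n4)
      = lb (lb (lb (lb (Y0 a) (Z1 m3 n3)) (Z1 m4 n4)) (Z1 m1 n1)) (Z1 m2 n2) := by
  rw [lb_lb_Y0_Z1_Z1, lb_lb_Y0_Z1_Z1, lb_lb_Y0_Z1_Z1, lb_lb_Y0_Z1_Z1]
  congr 1
  ring
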